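/- arXiv:1801.02071 — 5 statements merged into one kernel-verified Lean document; each statement's English description precedes it below -/
import Mathlib

section
/- With the notation of the quasi-multiplicative basis setting: for i ∈ I, j̄ ∈ Ī (the barred copy of I), and a₁,…,a_{n-1} elements of 𝔉 = I ∪ {v}, it holds that i ∈ μ(j̄, a₁,…,a_{n-1}) if and only if j ∈ μ(ī, a₁,…,a_{n-1}). -/
/-!
Swapping the first two arguments of `a` does not change it once the permutation index is
multiplied by the transposition `(0 1)`.  So if `x ∈ b_σ(z, y, f)`, i.e. `a_σ(x, y, f) = {z}`,
then `a_{(0 1)σ}(y, x, f) = {z}`, i.e. `y ∈ b_{(0 1)σ}(z, x, f)`; taking unions over `k` and `σ`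
gives the symmetry of `μ`.
-/

section QuasiMultiplicative

variable {I : Type} {n : ℕ}
  {a : Equiv.Perm (Fin (n + 2)) → (Fin (n + 2) → Option I) → Set (Option I)}
  {b : Equiv.Perm (Fin (n + 2)) → Option I → (Fin (n + 1) → Option I) → Set (Option I)}

theorem mem_b_swap_mul_of_mem_b
    (H1 : ∀ (σ : Equiv.Perm (Fin (n + 2))) (i j : Option I) (c : Fin (n + 1) → Option I),
      a σ (Fin.cons j c) = {i} → j ∈ b σ i c)
    (H2 : ∀ (σ : Equiv.Perm (Fin (n + 2))) (i j : Option I) (c : Fin (n + 1) → Option I),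
      i ∈ b σ j c → a σ (Fin.cons i c) = {j})
    (Hperm : ∀ (σ ν : Equiv.Perm (Fin (n + 2))) (c c' : Fin (n + 2) → Option I),
      (∀ t, c (σ t) = c' (ν t)) → a σ c = a ν c')
    {σ : Equiv.Perm (Fin (n + 2))} {x y z : Option I} {f : Fin n → Option I}
    (h : x ∈ b σ z (Fin.cons y f)) :
    y ∈ b (Equiv.swap 0 1 * σ) z (Fin.cons x f) := by
  refine H1 _ _ _ _ ?_
  rw [← H2 σ _ _ _ h]
  refine (Hperm _ _ _ _ fun t => ?_).symm
  exact (congrFun (Matrix.cons_cons_comp_swap_zero_one y x f) (σ t)).symm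

theorem mem_iUnion_b_cons_symm
    (H1 : ∀ (σ : Equiv.Perm (Fin (n + 2))) (i j : Option I) (c : Fin (n + 1) → Option I),
      a σ (Fin.cons j c) = {i} → j ∈ b σ i c)
    (H2 : ∀ (σ : Equiv.Perm (Fin (n + 2))) (i j : Option I) (c : Fin (n + 1) → Option I),
      i ∈ b σ j c → a σ (Fin.cons i c) = {j})
    (Hperm : ∀ (σ ν : Equiv.Perm (Fin (n + 2))) (c c' : Fin (n + 2) → Option I),
      (∀ t, c (σ t) = c' (ν t)) → a σ c = a ν c')
    {x y : Option I} {c : Fin (n + 1) → Option I}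
    (h : x ∈ ⋃ (k : Fin (n + 1)) (σ : Equiv.Perm (Fin (n + 2))),
      b σ (c k) (Fin.cons y fun t => c (k.succAbove t))) :
    y ∈ ⋃ (k : Fin (n + 1)) (σ : Equiv.Perm (Fin (n + 2))),
      b σ (c k) (Fin.cons x fun t => c (k.succAbove t)) := by
  simp only [Set.mem_iUnion] at h ⊢
  obtain ⟨k, σ, hk⟩ := h
  exact ⟨k, _, mem_b_swap_mul_of_mem_b H1 H2 Hperm hk⟩

end QuasiMultiplicative

theorem stmt1_general {I : Type} {n : ℕ}
    (a : Equiv.Perm (Fin (n + 2)) → (Fin (n + 2) → Option I) → Set (Option I))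
    (b : Equiv.Perm (Fin (n + 2)) → Option I → (Fin (n + 1) → Option I) → Set (Option I))
    (H1 : ∀ (σ : Equiv.Perm (Fin (n + 2))) (i j : Option I) (c : Fin (n + 1) → Option I),
      a σ (Fin.cons j c) = {i} → j ∈ b σ i c)
    (H2 : ∀ (σ : Equiv.Perm (Fin (n + 2))) (i j : Option I) (c : Fin (n + 1) → Option I),
      i ∈ b σ j c → a σ (Fin.cons i c) = {j})
    (Hperm : ∀ (σ ν : Equiv.Perm (Fin (n + 2))) (c c' : Fin (n + 2) → Option I),
      (∀ t, c (σ t) = c' (ν t)) → a σ c = a ν c')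
    (i j : I) (c : Fin (n + 1) → Option I) :
    (some i ∈ ⋃ (k : Fin (n + 1)) (σ : Equiv.Perm (Fin (n + 2))),
        b σ (c k) (Fin.cons (some j) fun t => c (k.succAbove t))) ↔
    (some j ∈ ⋃ (k : Fin (n + 1)) (σ : Equiv.Perm (Fin (n + 2))),
        b σ (c k) (Fin.cons (some i) fun t => c (k.succAbove t))) :=
  ⟨mem_iUnion_b_cons_symm H1 H2 Hperm, mem_iUnion_b_cons_symm H1 H2 Hperm⟩

/-- For `i ∈ I`, `j̄ ∈ Ī` and `a₁, …, a_{n-1} ∈ 𝔉`: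
`i ∈ μ(j̄, a₁, …, a_{n-1})` iff `j ∈ μ(ī, a₁, …, a_{n-1})`, where
`μ(j̄, c) = ⋃_{k, σ} b_σ(c k, j̄, c̄ with the k-th entry removed)`.  The hypotheses are the
`a`/`b` compatibilities of a quasi-multiplicative basis and the invariance of `a` under
simultaneous permutation of its arguments. -/
theorem stmt1 {I : Type} {n : ℕ}
    (a : Equiv.Perm (Fin (n + 2)) → (Fin (n + 2) → Option I) → Set (Option I))
    (b : Equiv.Perm (Fin (n + 2)) → Option I → (Fin (n + 1) → Option I) → Set (Option I))
    (hsub : ∀ σ c, (a σ c).Subsingleton)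
    (H1 : ∀ (σ : Equiv.Perm (Fin (n + 2))) (i j : Option I) (c : Fin (n + 1) → Option I),
      a σ (Fin.cons j c) = {i} → j ∈ b σ i c)
    (H2 : ∀ (σ : Equiv.Perm (Fin (n + 2))) (i j : Option I) (c : Fin (n + 1) → Option I),
      i ∈ b σ j c → a σ (Fin.cons i c) = {j})
    (Hperm : ∀ (σ ν : Equiv.Perm (Fin (n + 2))) (c c' : Fin (n + 2) → Option I),
      (∀ t, c (σ t) = c' (ν t)) → a σ c = a ν c')
    (i j : I) (c : Fin (n + 1) → Option I) :
    (some i ∈ ⋃ (k : Fin (n + 1)) (σ : Equiv.Perm (Fin (n + 2))),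
        b σ (c k) (Fin.cons (some j) fun t => c (k.succAbove t))) ↔
    (some j ∈ ⋃ (k : Fin (n + 1)) (σ : Equiv.Perm (Fin (n + 2))),
        b σ (c k) (Fin.cons (some i) fun t => c (k.succAbove t))) :=
  stmt1_general a b H1 H2 Hperm i j c
end

section
/- Let J ∈ P(I ∪ Ī) with J = J̄ (bar-invariant), let a₂,…,aₙ ∈ 𝔉 ∪ 𝔉̄ form an admissible tuple, and let i ∈ I. Then the following are equivalent: (1) i ∈ φ(J, a₂,…,aₙ); (2) either φ({i}, ā₂,…,āₙ) ∩ J ∩ I ≠ ∅ or φ({ī}, a₂,…,aₙ) ∩ J ∩ I ≠ ∅. -/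
/-- The map `φ(J, X) = K ∪ K̄` with `K = (⋃_{j ∈ J} μ(j, X)) \ {v}`, where `I ∪ Ī` is
encoded as `I ⊕ I` (left = unbarred), `𝔉 = I ∪ {v}` as `Option I` (`none` = `v`),
`𝔉 ∪ 𝔉̄` as `Option I ⊕ Option I`, and an admissible tuple as a `Bool` (barred?) together
with an `(n+1)`-tuple over `𝔉`. -/
def phiAbs {I : Type} {n : ℕ}
    (mu : Option I ⊕ Option I → Bool × (Fin (n + 1) → Option I) → Set (Option I))
    (J : Set (I ⊕ I)) (X : Bool × (Fin (n + 1) → Option I)) : Set (I ⊕ I) :=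
  {p | ∃ i : I, (p = Sum.inl i ∨ p = Sum.inr i) ∧
    ∃ j ∈ J, some i ∈ mu (Sum.map some some j) X}

/-
Split the witness `j ∈ J` of `i ∈ φ(J, X)` by whether it is barred. An unbarred witness
`j` with `i ∈ μ(j, X)` is, by the first symmetry, an element `j ∈ J ∩ I` of `φ({i}, X̄)`; a
barred witness `j̄` with `i ∈ μ(j̄, X)` is, by the second symmetry, an element `j ∈ φ({ī}, X)`,
and `j ∈ J` because `J` is bar-invariant. Here `X̄` is encoded as `(!X.1, X.2)`.
-/

section PhiAbs

variable {I : Type} {n : ℕ}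
  (mu : Option I ⊕ Option I → Bool × (Fin (n + 1) → Option I) → Set (Option I))

theorem inl_mem_phiAbs_iff (J : Set (I ⊕ I)) (X : Bool × (Fin (n + 1) → Option I)) (i : I) :
    Sum.inl i ∈ phiAbs mu J X ↔ ∃ j ∈ J, some i ∈ mu (Sum.map some some j) X := by
  simp [phiAbs]

theorem phiAbs_singleton_inter_range_inl_nonempty_iff (j : I ⊕ I) (J : Set (I ⊕ I))
    (X : Bool × (Fin (n + 1) → Option I)) :
    (phiAbs mu {j} X ∩ J ∩ Set.range Sum.inl).Nonempty ↔
      ∃ k, Sum.inl k ∈ J ∧ some k ∈ mu (Sum.map some some j) X := by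
  constructor
  · rintro ⟨_, ⟨⟨k, hk, j', rfl, hmu⟩, hkJ⟩, m, rfl⟩
    obtain rfl : m = k := by simpa using hk
    exact ⟨m, hkJ, hmu⟩
  · rintro ⟨k, hkJ, hmu⟩
    exact ⟨Sum.inl k, ⟨⟨k, Or.inl rfl, j, rfl, hmu⟩, hkJ⟩, k, rfl⟩

end PhiAbs

theorem Sum.swap_mem_iff_of_image_swap_eq {α : Type*} {J : Set (α ⊕ α)}
    (hJ : Sum.swap '' J = J) (p : α ⊕ α) : p.swap ∈ J ↔ p ∈ J := by
  rw [Set.image_eq_preimage_of_inverse Sum.swap_leftInverse Sum.swap_rightInverse] at hJ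
  rw [← Set.mem_preimage, hJ]

/-- For a bar-invariant `J ⊆ I ∪ Ī`, an admissible tuple `X` and `i ∈ I`:
`i ∈ φ(J, X)` iff `φ({i}, X̄) ∩ J ∩ I ≠ ∅` or `φ({ī}, X) ∩ J ∩ I ≠ ∅`.  The hypotheses are
the two symmetry properties of `μ` (`X̄ = (!X.1, X.2)` is the barred tuple). -/
theorem stmt3 {I : Type} {n : ℕ}
    (mu : Option I ⊕ Option I → Bool × (Fin (n + 1) → Option I) → Set (Option I))
    (hsym1 : ∀ (i j : I) (X : Bool × (Fin (n + 1) → Option I)),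
      some i ∈ mu (Sum.inl (some j)) X ↔ some j ∈ mu (Sum.inl (some i)) (!X.1, X.2))
    (hsym2 : ∀ (i j : I) (X : Bool × (Fin (n + 1) → Option I)),
      some i ∈ mu (Sum.inr (some j)) X ↔ some j ∈ mu (Sum.inr (some i)) X)
    (J : Set (I ⊕ I)) (hJ : Sum.swap '' J = J)
    (X : Bool × (Fin (n + 1) → Option I)) (i : I) :
    Sum.inl i ∈ phiAbs mu J X ↔
      (phiAbs mu {Sum.inl i} (!X.1, X.2) ∩ J ∩ Set.range Sum.inl).Nonempty ∨
      (phiAbs mu {Sum.inr i} X ∩ J ∩ Set.range Sum.inl).Nonempty := by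
  have hbar : ∀ k : I, Sum.inr k ∈ J ↔ Sum.inl k ∈ J := fun k =>
    Sum.swap_mem_iff_of_image_swap_eq hJ (Sum.inl k)
  simp only [inl_mem_phiAbs_iff, phiAbs_singleton_inter_range_inl_nonempty_iff, Sum.exists,
    Sum.map_inl, Sum.map_inr, hsym1 i, hsym2 i, hbar]
end

section
/- Define a relation ∼ on I by: i ∼ j iff i = j or there exist t ≥ 1 and tuples X₁,…,X_t (each an admissible (n−1)-tuple over 𝔉 ∪ 𝔉̄) and ĩ ∈ {i, ī} such that the sets φ({ĩ}, X₁), φ(φ({ĩ}, X₁), X₂), …, φ(φ(⋯φ({ĩ}, X₁)⋯), X_{t-1}) are all nonempty and j ∈ φ(φ(⋯φ({ĩ}, X₁)⋯), X_t). Then ∼ is an equivalence relation on I. -/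
/-- Iterated application of `φ` along a list of admissible tuples. -/
def chainAbs {I : Type} {n : ℕ}
    (mu : Option I ⊕ Option I → Bool × (Fin (n + 1) → Option I) → Set (Option I)) :
    Set (I ⊕ I) → List (Bool × (Fin (n + 1) → Option I)) → Set (I ⊕ I)
  | s, [] => s
  | s, X :: r => chainAbs mu (phiAbs mu s X) r

/-- The connection relation determined by `μ`. -/
def ConnectedAbs {I : Type} {n : ℕ}
    (mu : Option I ⊕ Option I → Bool × (Fin (n + 1) → Option I) → Set (Option I))
    (i j : I) : Prop :=
  i = j ∨ ∃ (Xs : List (Bool × (Fin (n + 1) → Option I))) (st : I ⊕ I),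
    Xs ≠ [] ∧ (st = Sum.inl i ∨ st = Sum.inr i) ∧
    (∀ m, m < Xs.length → (chainAbs mu {st} (List.take m Xs)).Nonempty) ∧
    Sum.inl j ∈ chainAbs mu {st} Xs

section

open Relation

variable {I : Type} {n : ℕ}
  {mu : Option I ⊕ Option I → Bool × (Fin (n + 1) → Option I) → Set (Option I)}

def unbar : I ⊕ I → I := Sum.elim id id

@[simp] lemma unbar_inl (i : I) : unbar (Sum.inl i) = i := rfl

@[simp] lemma unbar_inr (i : I) : unbar (Sum.inr i) = i := rfl

lemma unbar_eq_iff {p : I ⊕ I} {i : I} : unbar p = i ↔ p = Sum.inl i ∨ p = Sum.inr i := by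
  cases p <;> simp [eq_comm]

lemma mem_phiAbs {J : Set (I ⊕ I)} {X : Bool × (Fin (n + 1) → Option I)} {p : I ⊕ I} :
    p ∈ phiAbs mu J X ↔ ∃ q ∈ J, some (unbar p) ∈ mu (Sum.map some some q) X := by
  simp only [phiAbs, Set.mem_ofPred_eq, ← unbar_eq_iff]
  exact ⟨fun ⟨_, rfl, h⟩ ↦ h, fun h ↦ ⟨_, rfl, h⟩⟩

@[simp] lemma phiAbs_empty (X : Bool × (Fin (n + 1) → Option I)) : phiAbs mu ∅ X = ∅ := by
  ext p
  simp [mem_phiAbs]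

@[simp] lemma chainAbs_empty (Xs : List (Bool × (Fin (n + 1) → Option I))) :
    chainAbs mu ∅ Xs = ∅ := by
  induction Xs with
  | nil => rfl
  | cons X Xs ih => simpa [chainAbs] using ih

lemma chainAbs_append (s : Set (I ⊕ I)) (Xs Ys : List (Bool × (Fin (n + 1) → Option I))) :
    chainAbs mu s (Xs ++ Ys) = chainAbs mu (chainAbs mu s Xs) Ys := by
  induction Xs generalizing s with
  | nil => rfl
  | cons X Xs ih => exact ih _

lemma chainAbs_concat (s : Set (I ⊕ I)) (Xs : List (Bool × (Fin (n + 1) → Option I)))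
    (X : Bool × (Fin (n + 1) → Option I)) :
    chainAbs mu s (Xs ++ [X]) = phiAbs mu (chainAbs mu s Xs) X := by
  rw [chainAbs_append]
  rfl

lemma chainAbs_nonempty_of_append {s : Set (I ⊕ I)}
    {Xs Ys : List (Bool × (Fin (n + 1) → Option I))}
    (h : (chainAbs mu s (Xs ++ Ys)).Nonempty) : (chainAbs mu s Xs).Nonempty := by
  rw [Set.nonempty_iff_ne_empty] at h ⊢
  rintro hXs
  rw [chainAbs_append, hXs, chainAbs_empty] at h
  exact h rfl

lemma mem_chainAbs_of_unbar_eq {s : Set (I ⊕ I)} {Xs : List (Bool × (Fin (n + 1) → Option I))}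
    (hXs : Xs ≠ []) {p p' : I ⊕ I} (hpp' : unbar p = unbar p') (hp : p ∈ chainAbs mu s Xs) :
    p' ∈ chainAbs mu s Xs := by
  obtain ⟨Ys, Y, rfl⟩ := (List.eq_nil_or_concat' Xs).resolve_left hXs
  rw [chainAbs_concat, mem_phiAbs, ← hpp'] at *
  exact hp

def PhiStep (mu : Option I ⊕ Option I → Bool × (Fin (n + 1) → Option I) → Set (Option I))
    (i j : I) : Prop :=
  ∃ (st : I ⊕ I) (X : Bool × (Fin (n + 1) → Option I)),
    unbar st = i ∧ some j ∈ mu (Sum.map some some st) X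

lemma phiStep_symm
    (hsym1 : ∀ (i j : I) (X : Bool × (Fin (n + 1) → Option I)),
      some i ∈ mu (Sum.inl (some j)) X ↔ some j ∈ mu (Sum.inl (some i)) (!X.1, X.2))
    (hsym2 : ∀ (i j : I) (X : Bool × (Fin (n + 1) → Option I)),
      some i ∈ mu (Sum.inr (some j)) X ↔ some j ∈ mu (Sum.inr (some i)) X)
    {i j : I} (h : PhiStep mu i j) : PhiStep mu j i := by
  obtain ⟨st | st, X, rfl, hX⟩ := h
  · exact ⟨Sum.inl j, (!X.1, X.2), rfl, (hsym1 j st X).mp hX⟩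
  · exact ⟨Sum.inr j, X, rfl, (hsym2 j st X).mp hX⟩

lemma exists_reflTransGen_of_mem_chainAbs {s : Set (I ⊕ I)}
    {Xs : List (Bool × (Fin (n + 1) → Option I))} {p : I ⊕ I} (hp : p ∈ chainAbs mu s Xs) :
    ∃ q ∈ s, ReflTransGen (PhiStep mu) (unbar q) (unbar p) := by
  induction Xs generalizing s with
  | nil => exact ⟨p, hp, .refl⟩
  | cons X Xs ih =>
    obtain ⟨q', hq', hq'p⟩ := ih hp
    obtain ⟨q, hq, hqq'⟩ := mem_phiAbs.mp hq'
    exact ⟨q, hq, .head ⟨q, X, rfl, hqq'⟩ hq'p⟩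

lemma exists_mem_chainAbs_of_transGen {i j : I} (h : TransGen (PhiStep mu) i j) :
    ∃ (Xs : List (Bool × (Fin (n + 1) → Option I))) (st : I ⊕ I),
      Xs ≠ [] ∧ unbar st = i ∧ Sum.inl j ∈ chainAbs mu {st} Xs := by
  induction h with
  | single hij =>
    obtain ⟨st, X, hst, hX⟩ := hij
    exact ⟨[X], st, List.cons_ne_nil _ _, hst, mem_phiAbs.mpr ⟨st, rfl, hX⟩⟩
  | @tail j k _ hjk ih =>
    obtain ⟨Xs, st, hXs, hst, hj⟩ := ih
    obtain ⟨st', X, hst', hX⟩ := hjk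
    have hst'_mem : st' ∈ chainAbs mu {st} Xs :=
      mem_chainAbs_of_unbar_eq (p := Sum.inl j) hXs hst'.symm hj
    refine ⟨Xs ++ [X], st, by simp, hst, ?_⟩
    rw [chainAbs_concat]
    exact mem_phiAbs.mpr ⟨st', hst'_mem, hX⟩

theorem connectedAbs_iff_reflTransGen {i j : I} :
    ConnectedAbs mu i j ↔ ReflTransGen (PhiStep mu) i j := by
  constructor
  · rintro (rfl | ⟨Xs, st, -, hst, -, hj⟩)
    · exact .refl
    · obtain ⟨q, rfl, hq⟩ := exists_reflTransGen_of_mem_chainAbs hj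
      rwa [← unbar_eq_iff.mpr hst]
  · intro h
    rcases reflTransGen_iff_eq_or_transGen.mp h with rfl | h
    · exact Or.inl rfl
    obtain ⟨Xs, st, hXs, hst, hj⟩ := exists_mem_chainAbs_of_transGen h
    refine Or.inr ⟨Xs, st, hXs, unbar_eq_iff.mp hst, fun m _ ↦ ?_, hj⟩
    rw [← List.take_append_drop m Xs] at hj
    exact chainAbs_nonempty_of_append ⟨_, hj⟩

end

/-- The connection relation `∼` on `I` (defined via iterated application of `φ`, with
reflexivity by convention) is an equivalence relation, provided `μ` satisfies the two
symmetry properties. -/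
theorem stmt4 {I : Type} {n : ℕ}
    (mu : Option I ⊕ Option I → Bool × (Fin (n + 1) → Option I) → Set (Option I))
    (hsym1 : ∀ (i j : I) (X : Bool × (Fin (n + 1) → Option I)),
      some i ∈ mu (Sum.inl (some j)) X ↔ some j ∈ mu (Sum.inl (some i)) (!X.1, X.2))
    (hsym2 : ∀ (i j : I) (X : Bool × (Fin (n + 1) → Option I)),
      some i ∈ mu (Sum.inr (some j)) X ↔ some j ∈ mu (Sum.inr (some i)) X) :
    Equivalence (ConnectedAbs mu) := by
  have hconn : ConnectedAbs mu = Relation.ReflTransGen (PhiStep mu) := by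
    ext i j
    exact connectedAbs_iff_reflTransGen
  have : Std.Symm (PhiStep mu) := ⟨fun _ _ ↦ phiStep_symm hsym1 hsym2⟩
  rw [hconn, ← Relation.EqvGen.eqvGen_eq_reflTransGen]
  exact Relation.EqvGen.is_equivalence _
end

section
/- Let L = V ⊕ W be a generalized Lie-type color algebra admitting a quasi-multiplicative basis {e_i}_{i∈I} of W ≠ 0, and let ∼ be the connection equivalence relation on I. For i ∈ I set W_{[i]} = ⊕_{j∈[i]} 𝔽e_j, V_{[i]} = (Σ_{i₁,…,iₙ∈[i]} 𝔽⟨e_{i₁},…,e_{iₙ}⟩) ∩ V, and 𝔍_{[i]} = V_{[i]} ⊕ W_{[i]}. Then 𝔍_{[i]} is a color gLt-ideal of L, i.e. ⟨𝔍_{[i]}, L, …, L⟩_σ ⊆ 𝔍_{[i]} for every σ ∈ Sₙ, and 𝔍_{[i]} admits a quasi-multiplicative basis inherited from that of L. -/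
set_option maxHeartbeats 1000000

/-- A (color) generalized Lie-type algebra: an `(n+2)`-ary `G`-graded algebra with
bicharacter `epsilon` satisfying the (colored) generalized Lie-type identities with
structure constants `alpha` (allowed to depend on the degrees of the arguments). -/
structure ColorGLT (F : Type) [Field F] (G : Type) [AddCommGroup G] [DecidableEq G]
    (L : Type) [AddCommGroup L] [Module F L] (n : ℕ) where
  bracket : MultilinearMap F (fun _ : Fin (n + 2) => L) L
  grading : G → Submodule F L
  isInternal : DirectSum.IsInternal grading
  bracket_graded : ∀ (g : Fin (n + 2) → G) (x : Fin (n + 2) → L),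
    (∀ t, x t ∈ grading (g t)) → bracket x ∈ grading (∑ t, g t)
  epsilon : G → G → F
  epsilon_ne_zero : ∀ g h, epsilon g h ≠ 0
  epsilon_add_left : ∀ g h k, epsilon (g + h) k = epsilon g k * epsilon h k
  epsilon_add_right : ∀ g h k, epsilon k (g + h) = epsilon k g * epsilon k h
  epsilon_skew : ∀ g h, epsilon g h * epsilon h g = 1
  alpha : Fin (n + 2) → Fin (n + 2) → Fin (n + 2) → Equiv.Perm (Fin (n + 2)) →
      Equiv.Perm (Fin (n + 1)) → (Fin (n + 2) → G) → (Fin (n + 1) → G) → F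
  glt : ∀ (k : Fin (n + 2)) (gx : Fin (n + 2) → G) (gy : Fin (n + 1) → G)
      (x : Fin (n + 2) → L) (y : Fin (n + 1) → L),
      (∀ t, x t ∈ grading (gx t)) → (∀ t, y t ∈ grading (gy t)) →
      bracket (Fin.insertNth k (bracket x) y) =
        ∑ i : Fin (n + 2), ∑ j : Fin (n + 2), ∑ σ₁ : Equiv.Perm (Fin (n + 2)),
          ∑ σ₂ : Equiv.Perm (Fin (n + 1)),
            alpha i j k σ₁ σ₂ gx gy •
              bracket (Function.update (fun t => x (σ₁ t)) i
                (bracket (Fin.insertNth j (x (σ₁ i)) (fun t => y (σ₂ t)))))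

namespace ColorGLT

variable {F : Type} [Field F] {G : Type} [AddCommGroup G] [DecidableEq G]
    {L : Type} [AddCommGroup L] [Module F L] {n : ℕ}

/-- A color gLt-ideal: a graded subspace `S` with `⟨S, L, …, L⟩_σ ⊆ S` for all `σ ∈ Sₙ`. -/
def IsIdeal (A : ColorGLT F G L n) (S : Submodule F L) : Prop :=
  (S = ⨆ g : G, S ⊓ A.grading g) ∧
  ∀ (σ : Equiv.Perm (Fin (n + 2))) (x : Fin (n + 2) → L),
    x 0 ∈ S → A.bracket (fun t => x (σ t)) ∈ S

/-- `L` is centerless: `Z(L) = {x : ⟨x, L, …, L⟩_σ = 0 ∀ σ} = 0`. -/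
def Centerless (A : ColorGLT F G L n) : Prop :=
  ∀ x : L, (∀ (σ : Equiv.Perm (Fin (n + 2))) (y : Fin (n + 2) → L),
    y 0 = x → A.bracket (fun t => y (σ t)) = 0) → x = 0

end ColorGLT

/-- A quasi-multiplicative basis of a color gLt-algebra: `L = V ⊕ W`, with a homogeneous
basis `{e i}` of `W ≠ 0` satisfying the three quasi-multiplicativity conditions. -/
structure QMBasis {F : Type} [Field F] {G : Type} [AddCommGroup G] [DecidableEq G]
    {L : Type} [AddCommGroup L] [Module F L] {n : ℕ}
    (A : ColorGLT F G L n) (I : Type) where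
  V : Submodule F L
  W : Submodule F L
  compl : IsCompl V W
  W_ne_bot : W ≠ ⊥
  V_graded : V = ⨆ g : G, V ⊓ A.grading g
  W_graded : W = ⨆ g : G, W ⊓ A.grading g
  e : I → L
  deg : I → G
  e_homog : ∀ i, e i ∈ A.grading (deg i)
  e_indep : LinearIndependent F e
  e_span : Submodule.span F (Set.range e) = W
  qm1 : ∀ c : Fin (n + 2) → I,
    (∃ j, A.bracket (fun t => e (c t)) ∈ Submodule.span F {e j}) ∨
      A.bracket (fun t => e (c t)) ∈ V
  qm2 : ∀ (σ : Equiv.Perm (Fin (n + 2))) (S : Finset (Fin (n + 2))),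
    S.Nonempty → S ≠ Finset.univ → ∀ ind : Fin (n + 2) → I, ∃ j : I,
      ∀ x : Fin (n + 2) → L, (∀ t, t ∈ S → x t = e (ind t)) →
        (∀ t, t ∉ S → x t ∈ V) →
        A.bracket (fun t => x (σ t)) ∈ Submodule.span F {e j}
  qm3 : (∃ j, ∀ x : Fin (n + 2) → L, (∀ t, x t ∈ V) →
          A.bracket x ∈ Submodule.span F {e j}) ∨
        (∀ x : Fin (n + 2) → L, (∀ t, x t ∈ V) → A.bracket x ∈ V)

namespace QMBasis

variable {F : Type} [Field F] {G : Type} [AddCommGroup G] [DecidableEq G]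
    {L : Type} [AddCommGroup L] [Module F L] {n : ℕ} {I : Type}
    {A : ColorGLT F G L n}

/-- The set of elements represented by an index of `𝔉 = I ∪ {v}`: `e i` for `some i`,
the subspace `V` for `none` (= `v`). -/
def elemSet (B : QMBasis A I) : Option I → Set L
  | none => (B.V : Set L)
  | some i => {B.e i}

/-- The target set of an index of `𝔉`: the line `𝔽 e j` for `some j`, `V` for `v`. -/
def targetSet (B : QMBasis A I) : Option I → Set L
  | none => (B.V : Set L)
  | some j => (Submodule.span F {B.e j} : Set L)

/-- `x ∈ a_σ(c)`: the `σ`-permuted product of the elements represented by `c` is nonzero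
and lands in the target represented by `x`; the value `v` is only allowed for all-basis
or all-`V` tuples. -/
def aMem (B : QMBasis A I) (σ : Equiv.Perm (Fin (n + 2)))
    (c : Fin (n + 2) → Option I) (x : Option I) : Prop :=
  (∃ z : Fin (n + 2) → L, (∀ t, z t ∈ B.elemSet (c (σ t))) ∧ A.bracket z ≠ 0) ∧
  (∀ z : Fin (n + 2) → L, (∀ t, z t ∈ B.elemSet (c (σ t))) → A.bracket z ∈ B.targetSet x) ∧
  (x = none → ((∀ t, (c t).isSome = true) ∨ (∀ t, c t = none)))

/-- An admissible `(n+1)`-tuple over `𝔉 ∪ 𝔉̄`: all entries barred (`true`) or all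
unbarred (`false`). -/
abbrev Tup (I : Type) (n : ℕ) := Bool × (Fin (n + 1) → Option I)

/-- `x ∈ μ(j, X)` where `j ∈ 𝔉 ∪ 𝔉̄` (left = unbarred, right = barred) and `X` is an
admissible tuple; defined via `a_σ` and `b_σ` as in the paper. -/
def muMem (B : QMBasis A I) :
    Option I ⊕ Option I → Tup I n → Option I → Prop
  | Sum.inl j, (false, c), x => ∃ σ : Equiv.Perm (Fin (n + 2)), B.aMem σ (Fin.cons j c) x
  | Sum.inl j, (true, c), x => ∃ σ : Equiv.Perm (Fin (n + 2)), B.aMem σ (Fin.cons x c) j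
  | Sum.inr j, (false, c), x =>
      ∃ (k : Fin (n + 1)) (σ : Equiv.Perm (Fin (n + 2))),
        B.aMem σ (Fin.cons x (Fin.cons j (fun t => c (k.succAbove t)))) (c k)
  | Sum.inr _, (true, _), _ => False

/-- The map `φ : P(I ∪ Ī) × T → P(I ∪ Ī)`, `φ(J, X) = K ∪ K̄` with
`K = (⋃_{j ∈ J} μ(j, X)) \ {v}` (left = `I`, right = `Ī`). -/
def phi (B : QMBasis A I) (J : Set (I ⊕ I)) (X : Tup I n) : Set (I ⊕ I) :=
  {p | ∃ i : I, (p = Sum.inl i ∨ p = Sum.inr i) ∧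
    ∃ j ∈ J, B.muMem (Sum.map some some j) X (some i)}

/-- Iterated application of `φ` along a list of tuples. -/
def chain (B : QMBasis A I) : Set (I ⊕ I) → List (Tup I n) → Set (I ⊕ I)
  | s, [] => s
  | s, X :: r => chain B (B.phi s X) r

/-- The connection relation: `i` is connected to `j`. -/
def Connected (B : QMBasis A I) (i j : I) : Prop :=
  i = j ∨ ∃ (Xs : List (Tup I n)) (st : I ⊕ I),
    Xs ≠ [] ∧ (st = Sum.inl i ∨ st = Sum.inr i) ∧
    (∀ m, m < Xs.length → (chain B {st} (List.take m Xs)).Nonempty) ∧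
    Sum.inl j ∈ chain B {st} Xs

/-- The connection class `[i]` of `i`. -/
def cls (B : QMBasis A I) (i : I) : Set I := {j | B.Connected i j}

/-- `W_{[i]} = ⊕_{j ∈ [i]} 𝔽 e_j`. -/
def Wcls (B : QMBasis A I) (i : I) : Submodule F L :=
  Submodule.span F (B.e '' B.cls i)

/-- `V_{[i]} = (Σ_{i₁,…,iₙ ∈ [i]} 𝔽⟨e_{i₁},…,e_{iₙ}⟩) ∩ V`. -/
def Vcls (B : QMBasis A I) (i : I) : Submodule F L :=
  Submodule.span F {z : L | ∃ c : Fin (n + 2) → I,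
    (∀ t, c t ∈ B.cls i) ∧ z = A.bracket (fun t => B.e (c t))} ⊓ B.V

/-- `𝔍_{[i]} = V_{[i]} ⊕ W_{[i]}`. -/
def Jcls (B : QMBasis A I) (i : I) : Submodule F L := B.Vcls i ⊔ B.Wcls i

/-- `S` admits a quasi-multiplicative basis inherited from that of `L`:
`S = V_S ⊕ W_S` with `V_S ⊆ V` and `W_S ≠ 0` spanned by a subset of the `e i`. -/
def HasInheritedBasis (B : QMBasis A I) (S : Submodule F L) : Prop :=
  ∃ (V' : Submodule F L) (J' : Set I), V' ≤ B.V ∧ J'.Nonempty ∧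
    S = V' ⊔ Submodule.span F (B.e '' J')

/-- `V` is tight: `V = 0` or `V = Σ_{μ(i₁,…,iₙ) = {v}} 𝔽⟨e_{i₁},…,e_{iₙ}⟩`. -/
def Tight (B : QMBasis A I) : Prop :=
  B.V = ⊥ ∨
    B.V = Submodule.span F {z : L | ∃ c : Fin (n + 2) → I,
      ({x : Option I | ∃ σ, B.aMem σ (fun t => some (c t)) x} = {none}) ∧
      z = A.bracket (fun t => B.e (c t))}

/-- The set of elements represented by `u_{k}`: `u_k = e_k + e_{k̄}` (`= e` of the
underlying index, since `e_{j̄} = 0`) if `k ∉ {v, v̄}`, and `u_k = V` otherwise. -/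
def uSet (B : QMBasis A I) : Option I ⊕ Option I → Set L
  | Sum.inl none => (B.V : Set L)
  | Sum.inr none => (B.V : Set L)
  | Sum.inl (some i) => {B.e i}
  | Sum.inr (some i) => {B.e i}

/-- The full `(n+2)`-tuple `(k₁, …, kₙ)` over `𝔉 ∪ 𝔉̄` obtained from a first entry and
an admissible tuple. -/
def fullTup {I : Type} {n : ℕ} (k₁ : Option I ⊕ Option I) (X : Tup I n) :
    Fin (n + 2) → Option I ⊕ Option I :=
  Fin.cons k₁ (fun t => if X.1 then Sum.inr (X.2 t) else Sum.inl (X.2 t))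

/-- The basis is `μ`-quasi-multiplicative: whenever `i ∈ μ(k₁, …, kₙ)` then
`e i ∈ 𝔽⟨u_{k₁}, …, u_{kₙ}⟩_σ` for some `σ ∈ Sₙ`. -/
def MuQM (B : QMBasis A I) : Prop :=
  ∀ (k₁ : Option I ⊕ Option I) (X : Tup I n) (i : I),
    B.muMem k₁ X (some i) →
    ∃ (σ : Equiv.Perm (Fin (n + 2))) (z : Fin (n + 2) → L),
      (∀ t, z t ∈ B.uSet (fullTup k₁ X (σ t))) ∧
      B.e i ∈ Submodule.span F {A.bracket z}

end QMBasis

/-!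
By multilinearity it suffices to show `⟨z₁, …, zₙ⟩ ∈ 𝔍_{[i]}` when one slot holds a
spanning vector of `𝔍_{[i]}` and every other slot holds an element of `V`, a basis vector,
or a homogeneous element. If the distinguished slot holds `e_j` with `j ∈ [i]`,
quasi-multiplicativity puts the product in a line `𝔽 e_m` or in `V`. In the first case the
tuple itself witnesses a one-step connection `j ∼ m`; in the second all slots are basis
vectors, and the tuple connects `j` (through `j̄`) to each of them, so the product lies in
`V_{[i]}`. If the distinguished slot holds a product `⟨e_{c₁}, …, e_{cₙ}⟩` with all `c_t ∈ [i]`,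
the gLt identity rewrites the whole product as a combination of products each of which still
has some `e_{c_t}` in a slot, which is the first case. Gradedness holds because `V` is graded
and the remaining generators of `𝔍_{[i]}` are homogeneous.
-/

theorem MultilinearMap.map_mem_of_forall_mem_span {R ι N : Type*} {M : ι → Type*}
    [Semiring R] [∀ t, AddCommMonoid (M t)] [∀ t, Module R (M t)] [AddCommMonoid N]
    [Module R N] [Finite ι] (f : MultilinearMap R M N) {S : Submodule R N}
    {gen : ∀ t, Set (M t)} (hgen : ∀ z : ∀ t, M t, (∀ t, z t ∈ gen t) → f z ∈ S)
    {z : ∀ t, M t} (hz : ∀ t, z t ∈ Submodule.span R (gen t)) : f z ∈ S := by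
  classical
  cases nonempty_fintype ι
  suffices key : ∀ T : Finset ι, ∀ z : ∀ t, M t, (∀ t ∉ T, z t ∈ gen t) →
      (∀ t, z t ∈ Submodule.span R (gen t)) → f z ∈ S from
    key Finset.univ z (by simp) hz
  intro T
  induction T using Finset.induction_on with
  | empty => exact fun z hzT _ => hgen z fun t => hzT t (Finset.notMem_empty t)
  | insert a T ha ih =>
    intro z hzT hz
    have hspan : Submodule.span R (gen a) ≤ S.comap (f.toLinearMap z a) := by
      rw [Submodule.span_le]
      intro x hx
      refine ih (Function.update z a x) (fun t ht => ?_) (fun t => ?_)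
      · rcases eq_or_ne t a with rfl | hta
        · simpa using hx
        · simpa [hta] using hzT t (by simp [hta, ht])
      · rcases eq_or_ne t a with rfl | hta
        · simpa using Submodule.subset_span hx
        · simpa [hta] using hz t
    simpa using hspan (hz a)

section GradedSubmodule

variable {R M ι : Type*} [Semiring R] [AddCommMonoid M] [Module R M] {𝓜 : ι → Submodule R M}

theorem Submodule.span_le_iSup_inf_of_homogeneous {s : Set M}
    (hs : ∀ x ∈ s, ∃ g, x ∈ 𝓜 g) : span R s ≤ ⨆ g, span R s ⊓ 𝓜 g := by
  rw [span_le]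
  intro x hx
  obtain ⟨g, hg⟩ := hs x hx
  exact mem_iSup_of_mem g ⟨subset_span hx, hg⟩

theorem Submodule.decompose_mem_of_le_iSup_inf [DecidableEq ι] [DirectSum.Decomposition 𝓜]
    {S : Submodule R M} (hS : S ≤ ⨆ g, S ⊓ 𝓜 g) {x : M} (hx : x ∈ S) (g : ι) :
    (DirectSum.decompose 𝓜 x g : M) ∈ S := by
  refine iSup_induction (fun g => S ⊓ 𝓜 g)
    (motive := fun x => (DirectSum.decompose 𝓜 x g : M) ∈ S) (hS hx) (fun h y hy => ?_)
    (by simp) (fun y y' hy hy' => by simpa using add_mem hy hy')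
  rcases eq_or_ne h g with rfl | hne
  · rw [DirectSum.decompose_of_mem_same 𝓜 hy.2]; exact hy.1
  · rw [DirectSum.decompose_of_mem_ne 𝓜 hy.2 hne]; exact zero_mem S

theorem Submodule.inf_le_iSup_inf [DecidableEq ι] (h𝓜 : DirectSum.IsInternal 𝓜)
    {S T : Submodule R M} (hS : S ≤ ⨆ g, S ⊓ 𝓜 g) (hT : T ≤ ⨆ g, T ⊓ 𝓜 g) :
    S ⊓ T ≤ ⨆ g, S ⊓ T ⊓ 𝓜 g := by
  classical
  let := h𝓜.chooseDecomposition
  intro x hx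
  rw [← DirectSum.sum_support_decompose 𝓜 x]
  exact sum_mem fun g _ => mem_iSup_of_mem g
    ⟨⟨decompose_mem_of_le_iSup_inf hS hx.1 g, decompose_mem_of_le_iSup_inf hT hx.2 g⟩,
      (DirectSum.decompose 𝓜 x g).2⟩

end GradedSubmodule

theorem Equiv.Perm.exists_apply_zero_apply_one {N : ℕ} {a b : Fin (N + 2)} (hab : a ≠ b) :
    ∃ τ : Equiv.Perm (Fin (N + 2)), τ 0 = a ∧ τ 1 = b := by
  have hb : Equiv.swap 0 a b ≠ 0 := fun h => hab (by
    simpa using congrArg (Equiv.swap 0 a) h.symm)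
  refine ⟨Equiv.swap 0 a * Equiv.swap 1 (Equiv.swap 0 a b), ?_, ?_⟩
  · simp [Equiv.swap_apply_of_ne_of_ne Fin.zero_ne_one hb.symm]
  · simp

namespace QMBasis

variable {F : Type} [Field F] {G : Type} [AddCommGroup G] [DecidableEq G]
    {L : Type} [AddCommGroup L] [Module F L] {n : ℕ} {I : Type}
    {A : ColorGLT F G L n} (B : QMBasis A I)

theorem chain_append_singleton (s : Set (I ⊕ I)) (l : List (Tup I n)) (X : Tup I n) :
    B.chain s (l ++ [X]) = B.phi (B.chain s l) X := by
  induction l generalizing s with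
  | nil => rfl
  | cons Y l ih => exact ih _

theorem inr_mem_phi {s : Set (I ⊕ I)} {X : Tup I n} {a : I} (h : Sum.inl a ∈ B.phi s X) :
    Sum.inr a ∈ B.phi s X := by
  obtain ⟨k, hk | hk, j, hj, hμ⟩ := h
  · cases hk
    exact ⟨a, Or.inr rfl, j, hj, hμ⟩
  · cases hk

theorem inr_mem_chain {s : Set (I ⊕ I)} {l : List (Tup I n)} {a : I} (hl : l ≠ [])
    (h : Sum.inl a ∈ B.chain s l) : Sum.inr a ∈ B.chain s l := by
  obtain ⟨l, X, rfl⟩ := l.eq_nil_or_concat'.resolve_left hl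
  rw [chain_append_singleton] at h ⊢
  exact B.inr_mem_phi h

variable {B} in
theorem Connected.of_muMem {i j m : I} (hij : B.Connected i j) {X : Tup I n} {st : I ⊕ I}
    (hst : st = Sum.inl j ∨ st = Sum.inr j) (h : B.muMem (Sum.map some some st) X (some m)) :
    B.Connected i m := by
  rcases hij with rfl | ⟨Xs, st₀, hXs, hst₀, hne, hj⟩
  · refine Or.inr ⟨[X], st, by simp, hst, fun k hk => ?_, ⟨m, Or.inl rfl, st, rfl, h⟩⟩
    obtain rfl : k = 0 := by simpa using hk
    exact ⟨st, rfl⟩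
  have hst_mem : st ∈ B.chain {st₀} Xs := by
    rcases hst with rfl | rfl
    · exact hj
    · exact B.inr_mem_chain hXs hj
  refine Or.inr ⟨Xs ++ [X], st₀, by simp, hst₀, fun k hk => ?_, ?_⟩
  · rcases Nat.lt_or_ge k Xs.length with hk' | hk'
    · rw [List.take_append_of_le_length hk'.le]
      exact hne k hk'
    · obtain rfl : k = Xs.length := by simp at hk; omega
      simpa using ⟨_, hj⟩
  · rw [chain_append_singleton]
    exact ⟨m, Or.inl rfl, st, hst_mem, h⟩

theorem aMem_comp_perm {σ : Equiv.Perm (Fin (n + 2))} {p : Fin (n + 2) → Option I}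
    {x : Option I} (h : B.aMem σ p x) (τ : Equiv.Perm (Fin (n + 2))) :
    B.aMem (τ⁻¹ * σ) (p ∘ τ) x := by
  have hp : ∀ t, (p ∘ τ) ((τ⁻¹ * σ) t) = p (σ t) := by simp
  obtain ⟨⟨z, hz, hnz⟩, hall, hnone⟩ := h
  refine ⟨⟨z, by simpa only [hp] using hz, hnz⟩,
    fun z' hz' => hall z' (by simpa only [hp] using hz'),
    fun hx => (hnone hx).imp (fun h t => h (τ t)) (fun h t => h (τ t))⟩

variable {B} in
theorem Connected.of_aMem {i j m : I} (hij : B.Connected i j) {σ : Equiv.Perm (Fin (n + 2))}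
    {p : Fin (n + 2) → Option I} {s : Fin (n + 2)} (hs : p s = some j)
    (h : B.aMem σ p (some m)) : B.Connected i m := by
  have hp : p ∘ Equiv.swap 0 s = Fin.cons (some j) (Fin.tail (p ∘ Equiv.swap 0 s)) := by
    rw [← hs, ← Fin.cons_self_tail (p ∘ Equiv.swap 0 s)]
    simp
  refine hij.of_muMem (X := (false, Fin.tail (p ∘ Equiv.swap 0 s))) (Or.inl rfl)
    ⟨(Equiv.swap 0 s)⁻¹ * σ, ?_⟩
  rw [← hp]
  exact B.aMem_comp_perm h _

variable {B} in
theorem Connected.of_bracket_mem_V {i : I} {q : Fin (n + 2) → I} {s : Fin (n + 2)}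
    (hs : B.Connected i (q s)) (hV : A.bracket (fun t => B.e (q t)) ∈ B.V)
    (hnz : A.bracket (fun t => B.e (q t)) ≠ 0) (t : Fin (n + 2)) : B.Connected i (q t) := by
  rcases eq_or_ne t s with rfl | hts
  · exact hs
  obtain ⟨τ, hτ0, hτ1⟩ := Equiv.Perm.exists_apply_zero_apply_one hts
  have h : B.aMem 1 (fun t => some (q t)) none :=
    ⟨⟨_, fun _ => rfl, hnz⟩, fun z hz => (funext hz : z = _) ▸ hV, fun _ => Or.inl fun _ => rfl⟩
  let c : Fin (n + 1) → Option I := Fin.cons none fun u => some (q (τ u.succ.succ))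
  have hshape : (fun t => some (q t)) ∘ τ = Fin.cons (some (q t))
      (Fin.cons (some (q s)) fun u => c ((0 : Fin (n + 1)).succAbove u)) := by
    funext u
    induction u using Fin.cases with
    | zero => simp [hτ0]
    | succ u =>
      induction u using Fin.cases with
      | zero => simp [← hτ1]
      | succ u => simp [c]
  refine hs.of_muMem (X := (false, c)) (Or.inr rfl) ⟨0, τ⁻¹, ?_⟩
  rw [← hshape, ← mul_one τ⁻¹]
  exact B.aMem_comp_perm h τ

theorem bracket_mem_Jcls_of_pattern (i : I) {j : I} (hj : j ∈ B.cls i)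
    (p : Fin (n + 2) → Option I) {s : Fin (n + 2)} (hs : p s = some j)
    (z : Fin (n + 2) → L) (hz : ∀ t, z t ∈ B.elemSet (p t)) : A.bracket z ∈ B.Jcls i := by
  by_cases hnz : A.bracket z = 0
  · rw [hnz]; exact zero_mem _
  have of_line : ∀ m, (∀ z' : Fin (n + 2) → L, (∀ t, z' t ∈ B.elemSet (p t)) →
      A.bracket z' ∈ Submodule.span F {B.e m}) → A.bracket z ∈ B.Jcls i := by
    intro m hm
    have hcm : B.Connected i m :=
      Connected.of_aMem hj (σ := 1) hs ⟨⟨z, hz, hnz⟩, hm, nofun⟩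
    refine Submodule.mem_sup_right (Submodule.span_mono ?_ (hm z hz))
    exact Set.singleton_subset_iff.2 ⟨m, hcm, rfl⟩
  by_cases hall : ∀ t, ∃ k, p t = some k
  · choose q hq using hall
    have hpat : ∀ z' : Fin (n + 2) → L, (∀ t, z' t ∈ B.elemSet (p t)) →
        z' = fun t => B.e (q t) := fun z' hz' => funext fun t => by
      simpa [hq, elemSet] using hz' t
    obtain rfl := hpat z hz
    rcases B.qm1 q with ⟨m, hm⟩ | hV
    · exact of_line m fun z' hz' => hpat z' hz' ▸ hm
    · have hqs : q s = j := Option.some_inj.1 ((hq s).symm.trans hs)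
      rw [← hqs] at hj
      exact Submodule.mem_sup_left
        ⟨Submodule.subset_span ⟨q, hj.of_bracket_mem_V hV hnz, rfl⟩, hV⟩
  · obtain ⟨m, hm⟩ := B.qm2 1 {t | (p t).isSome} ⟨s, by simp [hs]⟩
      (by simpa [Finset.eq_univ_iff_forall, Option.isSome_iff_exists] using hall)
      (fun t => (p t).getD j)
    refine of_line m fun z' hz' => ?_
    have hline := hm z' (fun t ht => ?_) (fun t ht => ?_)
    · simpa using hline
    · obtain ⟨k, hk⟩ := Option.isSome_iff_exists.1 (by simpa using ht)
      simpa [hk, elemSet] using hz' t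
    · have hk : p t = none := by simpa using ht
      simpa [hk, elemSet] using hz' t

theorem span_iUnion_elemSet : Submodule.span F (⋃ o, B.elemSet o) = ⊤ := by
  refine eq_top_iff.2 (B.compl.sup_eq_top ▸ sup_le ?_ ?_)
  · exact fun x hx => Submodule.subset_span (Set.mem_iUnion.2 ⟨none, hx⟩)
  · rw [← B.e_span, Submodule.span_le]
    rintro _ ⟨k, rfl⟩
    exact Submodule.subset_span (Set.mem_iUnion.2 ⟨some k, rfl⟩)

theorem bracket_mem_Jcls_of_basis_slot (i : I) {j : I} (hj : j ∈ B.cls i)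
    (z : Fin (n + 2) → L) (s : Fin (n + 2)) (hs : z s = B.e j) : A.bracket z ∈ B.Jcls i := by
  refine A.bracket.map_mem_of_forall_mem_span
    (gen := Function.update (fun _ => ⋃ o, B.elemSet o) s (B.elemSet (some j)))
    (fun z' hz' => ?_) (fun t => ?_)
  · have hp : ∀ t, ∃ o, z' t ∈ B.elemSet o ∧ (t = s → o = some j) := by
      intro t
      rcases eq_or_ne t s with rfl | hts
      · exact ⟨some j, by simpa using hz' t, fun _ => rfl⟩
      · simpa [hts] using hz' t
    choose p hp hps using hp
    exact B.bracket_mem_Jcls_of_pattern i hj p (hps s rfl) z' hp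
  · rcases eq_or_ne t s with rfl | hts
    · simp [hs, elemSet, Submodule.mem_span_singleton_self]
    · simp [hts, B.span_iUnion_elemSet]

theorem bracket_insertNth_mem_Jcls (i : I) {c : Fin (n + 2) → I} (hc : ∀ t, c t ∈ B.cls i)
    (s : Fin (n + 2)) {gy : Fin (n + 1) → G} {y : Fin (n + 1) → L}
    (hy : ∀ t, y t ∈ A.grading (gy t)) :
    A.bracket (Fin.insertNth s (A.bracket fun t => B.e (c t)) y) ∈ B.Jcls i := by
  rw [A.glt s _ gy _ y (fun t => B.e_homog (c t)) hy]
  refine Submodule.sum_mem _ fun i₁ _ => Submodule.sum_mem _ fun _ _ =>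
    Submodule.sum_mem _ fun σ₁ _ => Submodule.sum_mem _ fun _ _ => Submodule.smul_mem _ _ ?_
  -- each term keeps a basis vector `e_{c_t}` in some slot `t₀ ≠ i₁`, as there are ≥ 2 slots
  obtain ⟨t₀, ht₀⟩ := exists_ne i₁
  exact B.bracket_mem_Jcls_of_basis_slot i (hc (σ₁ t₀)) _ t₀ (Function.update_of_ne ht₀ _ _)

theorem bracket_mem_Jcls_of_product_slot (i : I) {c : Fin (n + 2) → I}
    (hc : ∀ t, c t ∈ B.cls i) (z : Fin (n + 2) → L) (s : Fin (n + 2))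
    (hs : z s = A.bracket fun t => B.e (c t)) : A.bracket z ∈ B.Jcls i := by
  refine A.bracket.map_mem_of_forall_mem_span
    (gen := Function.update (fun _ => ⋃ g, (A.grading g : Set L)) s {z s})
    (fun z' hz' => ?_) (fun t => ?_)
  · have hy : ∀ u, ∃ g, z' (s.succAbove u) ∈ A.grading g := fun u => by
      simpa [Fin.succAbove_ne] using hz' (s.succAbove u)
    choose gy hgy using hy
    have hz's : z' s = A.bracket fun t => B.e (c t) := by simpa [hs] using hz' s
    rw [← Fin.insertNth_self_removeNth s z', hz's]
    exact B.bracket_insertNth_mem_Jcls i hc s hgy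
  · rcases eq_or_ne t s with rfl | hts
    · simp [Submodule.mem_span_singleton_self]
    · simp [hts, ← Submodule.iSup_eq_span, A.isInternal.submodule_iSup_eq_top]

theorem bracket_mem_Jcls_of_mem_slot (i : I) (z : Fin (n + 2) → L) (s : Fin (n + 2))
    (hs : z s ∈ B.Jcls i) : A.bracket z ∈ B.Jcls i := by
  suffices h : B.Jcls i ≤ (B.Jcls i).comap (A.bracket.toLinearMap z s) by simpa using h hs
  refine sup_le (inf_le_left.trans ?_) ?_
  · rw [Submodule.span_le]
    rintro _ ⟨c, hc, rfl⟩
    simpa using B.bracket_mem_Jcls_of_product_slot i hc _ s (Function.update_self _ _ _)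
  · rw [Wcls, Submodule.span_le]
    rintro _ ⟨j, hj, rfl⟩
    simpa using B.bracket_mem_Jcls_of_basis_slot i hj _ s (Function.update_self _ _ _)

theorem Jcls_le_iSup_inf_grading (i : I) : B.Jcls i ≤ ⨆ g, B.Jcls i ⊓ A.grading g := by
  have hV : B.Vcls i ≤ ⨆ g, B.Vcls i ⊓ A.grading g :=
    Submodule.inf_le_iSup_inf A.isInternal
      (Submodule.span_le_iSup_inf_of_homogeneous fun _ ⟨c, _, hc⟩ =>
        ⟨_, hc ▸ A.bracket_graded _ _ fun t => B.e_homog (c t)⟩)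
      B.V_graded.le
  have hW : B.Wcls i ≤ ⨆ g, B.Wcls i ⊓ A.grading g :=
    Submodule.span_le_iSup_inf_of_homogeneous fun _ ⟨j, _, hj⟩ => ⟨_, hj ▸ B.e_homog j⟩
  exact sup_le (hV.trans (iSup_mono fun _ => inf_le_inf_right _ le_sup_left))
    (hW.trans (iSup_mono fun _ => inf_le_inf_right _ le_sup_right))

end QMBasis

theorem stmt5 {F : Type} [Field F] {G : Type} [AddCommGroup G] [DecidableEq G]
    {L : Type} [AddCommGroup L] [Module F L] {n : ℕ} {I : Type}
    {A : ColorGLT F G L n} (B : QMBasis A I) (i : I) :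
    A.IsIdeal (B.Jcls i) ∧ B.HasInheritedBasis (B.Jcls i) := by
  refine ⟨⟨le_antisymm (B.Jcls_le_iSup_inf_grading i) (iSup_le fun _ => inf_le_left),
    fun σ x hx => B.bracket_mem_Jcls_of_mem_slot i _ (σ⁻¹ 0) (by simpa using hx)⟩,
    B.Vcls i, B.cls i, inf_le_right, ⟨i, Or.inl rfl⟩, rfl⟩
end

section
/- Let L = V ⊕ W be a color gLt-algebra admitting a quasi-multiplicative basis {e_i}_{i∈I} of W ≠ 0, and let i, h ∈ I with [i] ≠ [h]. Then ⟨𝔍_{[i]}, 𝔍_{[h]}, L, …, L⟩_σ = 0 for every σ ∈ Sₙ, where 𝔍_{[i]} = V_{[i]} ⊕ W_{[i]} and 𝔍_{[h]} = V_{[h]} ⊕ W_{[h]} are the color gLt-ideals associated to the connection classes [i] and [h]. -/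
set_option maxHeartbeats 1000000

/-!
Connection is the reflexive-transitive closure of a symmetric one-step relation `Adj`, hence an
equivalence relation. By quasi-multiplicativity a nonzero product of basis vectors and elements of
`V` lies in some line `𝔽 e_m` or in `V`, and in either case any two of its basis factors are
connected; so such a product vanishes as soon as it has basis factors from two different classes.

`𝔍_{[i]}` is spanned by the `e_j` with `j ∈ [i]` together with the products of such vectors, and
`L` by the homogeneous elements of `V` and the basis vectors, so by multilinearity it suffices to
treat these generators. A product having an inner product `⟨e_{j₁}, …⟩` as an argument is expanded
by the gLt identity into products with one nesting level less, each of which still has arguments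
from both classes; one or two such expansions reduce everything to the previous case.
-/

theorem Fin.exists_perm_apply_zero_apply_one {m : ℕ} {a b : Fin (m + 2)} (hab : a ≠ b) :
    ∃ π : Equiv.Perm (Fin (m + 2)), π 0 = a ∧ π 1 = b := by
  have hb : Equiv.swap 0 a b ≠ 0 := fun h =>
    hab (Eq.symm (by simpa using Equiv.swap_apply_eq_iff.1 h))
  refine ⟨Equiv.swap 0 a * Equiv.swap 1 (Equiv.swap 0 a b), ?_, ?_⟩
  · simp [Equiv.swap_apply_of_ne_of_ne zero_ne_one hb.symm]
  · simp

theorem Fin.insertNth_removeNth_comp_mem {α : Type*} {m : ℕ} {S : Set α} {z : Fin (m + 2) → α}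
    {a : Fin (m + 2)} {p : Fin (m + 1)} (hz : ∀ t, t ≠ a → t ≠ a.succAbove p → z t ∈ S)
    (j : Fin (m + 2)) (v : α) (σ : Equiv.Perm (Fin (m + 1))) (s : Fin (m + 2)) (hsj : s ≠ j)
    (hsp : s ≠ j.succAbove (σ.symm p)) :
    (Fin.insertNth j v (fun r => Fin.removeNth a z (σ r)) : Fin (m + 2) → α) s ∈ S := by
  obtain ⟨s, rfl⟩ := Fin.exists_succAbove_eq hsj
  rw [Fin.insertNth_apply_succAbove]
  refine hz _ (Fin.succAbove_ne a _) fun h => hsp ?_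
  rw [← Fin.succAbove_right_injective h, Equiv.symm_apply_apply]

theorem MultilinearMap.map_eq_zero_of_forall_mem_span {R ι N : Type*} {M : ι → Type*}
    [CommSemiring R] [Fintype ι] [∀ i, AddCommMonoid (M i)] [∀ i, Module R (M i)]
    [AddCommMonoid N] [Module R N] (f : MultilinearMap R M N) (s : ∀ i, Set (M i))
    (hf : ∀ z : ∀ i, M i, (∀ i, z i ∈ s i) → f z = 0) {y : ∀ i, M i}
    (hy : ∀ i, y i ∈ Submodule.span R (s i)) : f y = 0 := by
  classical
  suffices H : ∀ T : Finset ι, ∀ y : ∀ i, M i, (∀ i ∈ T, y i ∈ Submodule.span R (s i)) →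
      (∀ i ∉ T, y i ∈ s i) → f y = 0 from
    H Finset.univ y (fun i _ => hy i) fun i hi => (hi (Finset.mem_univ i)).elim
  intro T
  induction T using Finset.induction with
  | empty => exact fun y _ hy => hf y fun i => hy i (Finset.notMem_empty i)
  | insert a T ha ih =>
    intro y hyT hy
    have hspan : Submodule.span R (s a) ≤ LinearMap.ker (f.toLinearMap y a) :=
      Submodule.span_le.2 fun v hv => by
        refine ih _ (fun i hi => ?_) fun i hi => ?_
        · rw [Function.update_of_ne (ne_of_mem_of_not_mem hi ha)]
          exact hyT i (Finset.mem_insert_of_mem hi)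
        · by_cases hia : i = a
          · subst hia
            rwa [Function.update_self]
          · rw [Function.update_of_ne hia]
            exact hy i (by simp [hia, hi])
    simpa using hspan (hyT a (Finset.mem_insert_self a T))

namespace ColorGLT

variable {F : Type} [Field F] {G : Type} [AddCommGroup G] [DecidableEq G]
    {L : Type} [AddCommGroup L] [Module F L] {n : ℕ} (A : ColorGLT F G L n)

theorem isHomogeneousElem_bracket {x : Fin (n + 2) → L}
    (hx : ∀ t, SetLike.IsHomogeneousElem A.grading (x t)) :
    SetLike.IsHomogeneousElem A.grading (A.bracket x) := by
  choose g hg using hx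
  exact ⟨_, A.bracket_graded g x hg⟩

/-- By the gLt identity, `⟨…, ⟨x⟩, …⟩` is a combination of products whose inner factor is some
`x_t` together with a permutation of the remaining arguments. -/
theorem bracket_eq_zero_of_inner_eq_zero {z x : Fin (n + 2) → L} {a : Fin (n + 2)}
    (hza : z a = A.bracket x) (hx : ∀ t, SetLike.IsHomogeneousElem A.grading (x t))
    (hz : ∀ t, t ≠ a → SetLike.IsHomogeneousElem A.grading (z t))
    (h : ∀ (t j : Fin (n + 2)) (σ : Equiv.Perm (Fin (n + 1))),
      A.bracket (Fin.insertNth j (x t) (fun r => Fin.removeNth a z (σ r))) = 0) :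
    A.bracket z = 0 := by
  choose gx hgx using hx
  choose gy hgy using fun r => hz (a.succAbove r) (Fin.succAbove_ne a r)
  rw [← Fin.insertNth_self_removeNth a z, hza, A.glt a gx gy x (Fin.removeNth a z) hgx hgy]
  refine Finset.sum_eq_zero fun t _ => Finset.sum_eq_zero fun j _ =>
    Finset.sum_eq_zero fun _ _ => Finset.sum_eq_zero fun σ _ => ?_
  rw [h, MultilinearMap.map_update_zero, smul_zero]

end ColorGLT

namespace QMBasis

variable {F : Type} [Field F] {G : Type} [AddCommGroup G] [DecidableEq G]
    {L : Type} [AddCommGroup L] [Module F L] {n : ℕ} {I : Type}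
    {A : ColorGLT F G L n} (B : QMBasis A I)

theorem e_not_mem_V (j : I) : B.e j ∉ B.V := fun hV =>
  B.e_indep.ne_zero j <| Submodule.disjoint_def.1 B.compl.disjoint _ hV <|
    B.e_span ▸ Submodule.subset_span ⟨j, rfl⟩

def gens : Set L := (B.V : Set L) ∪ Set.range B.e

def homogeneousGens : Set L := {x ∈ B.gens | SetLike.IsHomogeneousElem A.grading x}

def clsProducts (u : I) : Set L :=
  {z | ∃ c : Fin (n + 2) → I, (∀ t, c t ∈ B.cls u) ∧ z = A.bracket (fun t => B.e (c t))}

def clsGens (u : I) : Set L := B.e '' B.cls u ∪ B.clsProducts u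

theorem isHomogeneousElem_of_mem_clsProducts {u : I} {z : L} (hz : z ∈ B.clsProducts u) :
    SetLike.IsHomogeneousElem A.grading z := by
  obtain ⟨c, -, rfl⟩ := hz
  exact A.isHomogeneousElem_bracket fun t => ⟨_, B.e_homog (c t)⟩

theorem span_homogeneousGens : Submodule.span F B.homogeneousGens = ⊤ := by
  rw [eq_top_iff, ← B.compl.sup_eq_top]
  refine sup_le ?_ ?_
  · rw [B.V_graded]
    exact iSup_le fun g x hx => Submodule.subset_span ⟨Or.inl hx.1, g, hx.2⟩
  · rw [← B.e_span]
    exact Submodule.span_le.2 <| Set.range_subset_iff.2 fun m =>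
      Submodule.subset_span ⟨Or.inr ⟨m, rfl⟩, _, B.e_homog m⟩

theorem Jcls_le_span_clsGens (u : I) : B.Jcls u ≤ Submodule.span F (B.clsGens u) := by
  rw [clsGens, Submodule.span_union]
  exact sup_le (le_sup_of_le_right inf_le_left) le_sup_left

/-- One step of the connection relation: `v ∈ μ(u, X)` or `v ∈ μ(ū, X)` for some tuple `X`. -/
def Adj (u v : I) : Prop :=
  ∃ X : Tup I n, B.muMem (Sum.inl (some u)) X (some v) ∨ B.muMem (Sum.inr (some u)) X (some v)

theorem exists_aMem_comp {c : Fin (n + 2) → Option I} {x : Option I}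
    (π : Equiv.Perm (Fin (n + 2))) (h : ∃ σ, B.aMem σ c x) : ∃ σ, B.aMem σ (c ∘ π) x := by
  obtain ⟨σ, ⟨z, hz, hz0⟩, htarget, hnone⟩ := h
  refine ⟨π⁻¹ * σ, ⟨z, fun t => by simpa using hz t, hz0⟩,
    fun z' hz' => htarget z' fun t => by simpa using hz' t, fun hx => ?_⟩
  exact (hnone hx).imp (fun h t => h (π t)) fun h t => h (π t)

theorem adj_symm {u v : I} : B.Adj u v → B.Adj v u := by
  rintro ⟨⟨_ | _, c⟩, h | h⟩
  · exact ⟨(true, c), Or.inl h⟩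
  · obtain ⟨k, hk⟩ := h
    refine ⟨(false, c), Or.inr ⟨k, ?_⟩⟩
    have hswap : (Fin.cons (some v) (Fin.cons (some u) fun t => c (k.succAbove t)) :
        Fin (n + 2) → Option I) ∘ Equiv.swap 0 1 =
        Fin.cons (some u) (Fin.cons (some v) fun t => c (k.succAbove t)) :=
      Matrix.cons_cons_comp_swap_zero_one _ _ _
    exact hswap ▸ B.exists_aMem_comp (Equiv.swap 0 1) hk
  · exact ⟨(false, c), Or.inl h⟩
  · exact h.elim

theorem mem_phi_iff {s : Set (I ⊕ I)} {X : Tup I n} {q : I ⊕ I} {w : I}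
    (hq : q = Sum.inl w ∨ q = Sum.inr w) :
    q ∈ B.phi s X ↔ ∃ p ∈ s, B.muMem (Sum.map some some p) X (some w) := by
  refine ⟨fun ⟨i, hi, hp⟩ => ?_, fun hp => ⟨w, hq, hp⟩⟩
  obtain rfl : w = i := by rcases hq with rfl | rfl <;> simpa using hi
  exact hp

theorem chain_mono {s s' : Set (I ⊕ I)} (h : s ⊆ s') (Xs : List (Tup I n)) :
    B.chain s Xs ⊆ B.chain s' Xs := by
  induction Xs generalizing s s' with
  | nil => exact h
  | cons X Xs ih => exact ih fun _ ⟨i, hi, p, hp, hmu⟩ => ⟨i, hi, p, h hp, hmu⟩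

theorem exists_reflTransGen_of_mem_chain {s : Set (I ⊕ I)} {Xs : List (Tup I n)} {v : I}
    (hv : Sum.inl v ∈ B.chain s Xs ∨ Sum.inr v ∈ B.chain s Xs) :
    ∃ u, (Sum.inl u ∈ s ∨ Sum.inr u ∈ s) ∧ Relation.ReflTransGen B.Adj u v := by
  induction Xs generalizing s with
  | nil => exact ⟨v, hv, .refl⟩
  | cons X Xs ih =>
    obtain ⟨w, hw, hwv⟩ := ih hv
    obtain ⟨p | p, hp, hmu⟩ :=
      hw.elim (B.mem_phi_iff (Or.inl rfl)).1 (B.mem_phi_iff (Or.inr rfl)).1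
    · exact ⟨p, Or.inl hp, .head ⟨X, Or.inl hmu⟩ hwv⟩
    · exact ⟨p, Or.inr hp, .head ⟨X, Or.inr hmu⟩ hwv⟩

theorem connected_of_adj_of_connected {u w v : I} (huw : B.Adj u w) (hwv : B.Connected w v) :
    B.Connected u v := by
  obtain ⟨X, hX⟩ := huw
  obtain ⟨p, hp, hstep⟩ : ∃ p : I ⊕ I, (p = Sum.inl u ∨ p = Sum.inr u) ∧
      ∀ q, (q = Sum.inl w ∨ q = Sum.inr w) → q ∈ B.phi {p} X := by
    rcases hX with h | h
    · exact ⟨Sum.inl u, Or.inl rfl, fun q hq => (B.mem_phi_iff hq).2 ⟨_, rfl, h⟩⟩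
    · exact ⟨Sum.inr u, Or.inr rfl, fun q hq => (B.mem_phi_iff hq).2 ⟨_, rfl, h⟩⟩
  rcases hwv with rfl | ⟨Xs, st, -, hst, hpre, hv⟩
  · refine Or.inr ⟨[X], p, List.cons_ne_nil _ _, hp, fun m hm => ?_, hstep _ (Or.inl rfl)⟩
    obtain rfl : m = 0 := by simpa using hm
    exact ⟨p, rfl⟩
  · have hsub : {st} ⊆ B.phi {p} X := Set.singleton_subset_iff.2 (hstep st hst)
    refine Or.inr ⟨X :: Xs, p, List.cons_ne_nil _ _, hp, fun m hm => ?_, B.chain_mono hsub Xs hv⟩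
    cases m with
    | zero => exact ⟨p, rfl⟩
    | succ m => exact (hpre m (by simpa using hm)).mono (B.chain_mono hsub _)

theorem connected_iff_reflTransGen {u v : I} :
    B.Connected u v ↔ Relation.ReflTransGen B.Adj u v := by
  refine ⟨?_, fun h => ?_⟩
  · rintro (rfl | ⟨Xs, st, -, hst, -, hv⟩)
    · exact .refl
    · obtain ⟨u', hu', hu'v⟩ := B.exists_reflTransGen_of_mem_chain (Or.inl hv)
      obtain rfl : u' = u := by
        rcases hu' with rfl | rfl <;> rcases hst with h | h <;> simp_all
      exact hu'v
  · induction h using Relation.ReflTransGen.head_induction_on with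
    | refl => exact Or.inl rfl
    | head huw _ ih => exact B.connected_of_adj_of_connected huw ih

theorem connected_equivalence : Equivalence B.Connected := by
  have : Std.Symm B.Adj := ⟨fun _ _ => B.adj_symm⟩
  rw [show B.Connected = Relation.ReflTransGen B.Adj from
    funext₂ fun _ _ => propext B.connected_iff_reflTransGen]
  exact ⟨fun _ => .refl, fun h => Std.Symm.symm _ _ h, .trans⟩

theorem cls_eq_of_connected {u w : I} (h : B.Connected u w) : B.cls u = B.cls w :=
  Set.ext fun _ => ⟨fun hx => B.connected_equivalence.trans (B.connected_equivalence.symm h) hx,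
    fun hx => B.connected_equivalence.trans h hx⟩

theorem connected_of_aMem_some {c : Fin (n + 2) → Option I} {a : Fin (n + 2)} {j m : I}
    (hca : c a = some j) (h : ∃ σ, B.aMem σ c (some m)) : B.Connected j m := by
  refine B.connected_iff_reflTransGen.2 (.single ⟨(false, Fin.removeNth a c), Or.inl ?_⟩)
  change ∃ σ, B.aMem σ (Fin.cons (some j) (Fin.removeNth a c)) (some m)
  rw [← hca, Fin.cons_removeNth_eq_comp_cycleRange_symm]
  exact B.exists_aMem_comp _ h

theorem connected_of_aMem_none {c : Fin (n + 2) → Option I} {a b : Fin (n + 2)} (hab : a ≠ b)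
    {j k : I} (hca : c a = some j) (hcb : c b = some k) (h : ∃ σ, B.aMem σ c none) :
    B.Connected k j := by
  obtain ⟨π, hπa, hπb⟩ := Fin.exists_perm_apply_zero_apply_one hab
  set rest : Fin n → Option I := fun t => c (π t.succ.succ)
  have hc : (Fin.cons (some j) (Fin.cons (some k) rest) : Fin (n + 2) → Option I) = c ∘ π := by
    funext t
    induction t using Fin.cases with
    | zero => simp [hπa, hca]
    | succ t =>
      induction t using Fin.cases with
      | zero => simp [hπb, hcb]
      | succ t => simp [rest]
  refine B.connected_iff_reflTransGen.2 (.single ⟨(false, Fin.cons none rest), Or.inr ⟨0, ?_⟩⟩)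
  change ∃ σ, B.aMem σ (Fin.cons (some j) (Fin.cons (some k) rest)) none
  rw [hc]
  exact B.exists_aMem_comp π h

theorem exists_aMem_of_bracket_ne_zero {c : Fin (n + 2) → Option I} {z : Fin (n + 2) → L}
    (hz : ∀ t, z t ∈ B.elemSet (c t)) (h0 : A.bracket z ≠ 0) : ∃ x, B.aMem 1 c x := by
  suffices ∃ x, (∀ z' : Fin (n + 2) → L, (∀ t, z' t ∈ B.elemSet (c t)) →
      A.bracket z' ∈ B.targetSet x) ∧
      (x = none → (∀ t, (c t).isSome = true) ∨ ∀ t, c t = none) by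
    obtain ⟨x, htarget, hnone⟩ := this
    exact ⟨x, ⟨z, hz, h0⟩, htarget, hnone⟩
  by_cases hsome : ∀ t, (c t).isSome
  · choose ind hind using fun t => Option.isSome_iff_exists.1 (hsome t)
    have hforced : ∀ z' : Fin (n + 2) → L, (∀ t, z' t ∈ B.elemSet (c t)) →
        z' = fun t => B.e (ind t) := fun z' hz' => funext fun t => by
      simpa [hind t, elemSet] using hz' t
    rcases B.qm1 ind with ⟨m, hm⟩ | hV
    · exact ⟨some m, fun z' hz' => hforced z' hz' ▸ hm, by simp⟩
    · exact ⟨none, fun z' hz' => hforced z' hz' ▸ hV, fun _ => Or.inl hsome⟩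
  by_cases hnone : ∀ t, c t = none
  · have hV : ∀ z' : Fin (n + 2) → L, (∀ t, z' t ∈ B.elemSet (c t)) → ∀ t, z' t ∈ B.V :=
      fun z' hz' t => by simpa [hnone t, elemSet] using hz' t
    rcases B.qm3 with ⟨m, hm⟩ | hVV
    · exact ⟨some m, fun z' hz' => hm z' (hV z' hz'), by simp⟩
    · exact ⟨none, fun z' hz' => hVV z' (hV z' hz'), fun _ => Or.inr hnone⟩
  push Not at hsome hnone
  obtain ⟨t₀, ht₀⟩ := hsome
  obtain ⟨t₁, ht₁⟩ := hnone
  obtain ⟨i₁, hi₁⟩ := Option.ne_none_iff_exists'.1 ht₁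
  set S := Finset.univ.filter fun t => (c t).isSome
  obtain ⟨m, hm⟩ := B.qm2 1 S ⟨t₁, by simp [S, hi₁]⟩
    (fun hS => by simpa [S, ht₀] using Finset.ext_iff.1 hS t₀) fun t => (c t).getD i₁
  refine ⟨some m, fun z' hz' => hm z' (fun t ht => ?_) (fun t ht => ?_), by simp⟩
  · obtain ⟨i, hi⟩ := Option.isSome_iff_exists.1 (by simpa [S] using ht)
    simpa [hi, elemSet] using hz' t
  · simpa [Option.not_isSome_iff_eq_none.1 (by simpa [S] using ht), elemSet] using hz' t

theorem connected_of_bracket_ne_zero {z : Fin (n + 2) → L} (hz : ∀ t, z t ∈ B.gens)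
    {a b : Fin (n + 2)} {j k : I} (ha : z a = B.e j) (hb : z b = B.e k)
    (h0 : A.bracket z ≠ 0) : B.Connected j k := by
  have hcode : ∀ t, ∃ o, z t ∈ B.elemSet o := fun t => by
    rcases hz t with hV | ⟨m, hm⟩
    · exact ⟨none, hV⟩
    · exact ⟨some m, hm.symm⟩
  choose c hc using hcode
  have hcode_eq : ∀ {t i}, z t = B.e i → c t = some i := fun {t i} hzt => by
    have := hc t
    rw [hzt] at this
    cases hct : c t with
    | none => exact (B.e_not_mem_V i (by simpa [hct, elemSet] using this)).elim
    | some m => simpa [hct, elemSet, B.e_indep.injective.eq_iff, eq_comm] using this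
  by_cases hab : a = b
  · subst hab
    obtain rfl := B.e_indep.injective (ha.symm.trans hb)
    exact B.connected_equivalence.refl j
  obtain ⟨x, hx⟩ := B.exists_aMem_of_bracket_ne_zero hc h0
  cases x with
  | none =>
    exact B.connected_equivalence.symm
      (B.connected_of_aMem_none hab (hcode_eq ha) (hcode_eq hb) ⟨1, hx⟩)
  | some m =>
    exact B.connected_equivalence.trans (B.connected_of_aMem_some (hcode_eq ha) ⟨1, hx⟩)
      (B.connected_equivalence.symm (B.connected_of_aMem_some (hcode_eq hb) ⟨1, hx⟩))

variable {u w : I} (huw : B.cls u ≠ B.cls w) {z : Fin (n + 2) → L} {a b : Fin (n + 2)}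
include huw

theorem bracket_eq_zero_of_basis_of_basis (ha : z a ∈ B.e '' B.cls u)
    (hb : z b ∈ B.e '' B.cls w) (hz : ∀ t, t ≠ a → t ≠ b → z t ∈ B.gens) :
    A.bracket z = 0 := by
  obtain ⟨j, hj, hja⟩ := ha
  obtain ⟨k, hk, hkb⟩ := hb
  have hgens : ∀ t, z t ∈ B.gens := fun t => by
    by_cases hta : t = a
    · exact Or.inr ⟨j, hta ▸ hja⟩
    by_cases htb : t = b
    · exact Or.inr ⟨k, htb ▸ hkb⟩
    exact hz t hta htb
  by_contra h0
  have hjk := B.connected_of_bracket_ne_zero hgens hja.symm hkb.symm h0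
  have hequiv := B.connected_equivalence
  exact huw (B.cls_eq_of_connected (hequiv.trans hj (hequiv.trans hjk (hequiv.symm hk))))

theorem bracket_eq_zero_of_basis_of_prod (hab : a ≠ b) (ha : z a ∈ B.e '' B.cls u)
    (hb : z b ∈ B.clsProducts w) (hz : ∀ t, t ≠ a → t ≠ b → z t ∈ B.homogeneousGens) :
    A.bracket z = 0 := by
  obtain ⟨c, hc, hzb⟩ := hb
  obtain ⟨p, rfl⟩ := Fin.exists_succAbove_eq hab
  refine A.bracket_eq_zero_of_inner_eq_zero hzb (fun t => ⟨_, B.e_homog (c t)⟩)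
    (fun t htb => ?_) fun t j σ => ?_
  · by_cases hta : t = b.succAbove p
    · obtain ⟨m, -, hm⟩ := ha
      exact ⟨_, hta ▸ hm ▸ B.e_homog m⟩
    · exact (hz t hta htb).2
  · refine B.bracket_eq_zero_of_basis_of_basis huw (a := j.succAbove (σ.symm p)) (b := j)
      (by simpa [Fin.removeNth_apply] using ha) ⟨c t, hc t, by simp⟩ fun s hsp hsj => ?_
    exact (Fin.insertNth_removeNth_comp_mem (fun t htb hta => (hz t hta htb).1) j _ σ s hsj hsp)

theorem bracket_eq_zero_of_prod_of_prod (hab : a ≠ b) (ha : z a ∈ B.clsProducts u)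
    (hb : z b ∈ B.clsProducts w) (hz : ∀ t, t ≠ a → t ≠ b → z t ∈ B.homogeneousGens) :
    A.bracket z = 0 := by
  obtain ⟨c, hc, hza⟩ := ha
  obtain ⟨p, rfl⟩ := Fin.exists_succAbove_eq hab.symm
  refine A.bracket_eq_zero_of_inner_eq_zero hza (fun t => ⟨_, B.e_homog (c t)⟩)
    (fun t hta => ?_) fun t j σ => ?_
  · by_cases htb : t = a.succAbove p
    · exact htb ▸ B.isHomogeneousElem_of_mem_clsProducts hb
    · exact (hz t hta htb).2
  · exact B.bracket_eq_zero_of_basis_of_prod huw (Fin.succAbove_ne j _).symm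
      ⟨c t, hc t, by simp⟩ (by simpa [Fin.removeNth_apply] using hb) (Fin.insertNth_removeNth_comp_mem hz j _ σ)

theorem bracket_eq_zero_of_mem_clsGens (hab : a ≠ b) (ha : z a ∈ B.clsGens u)
    (hb : z b ∈ B.clsGens w) (hz : ∀ t, t ≠ a → t ≠ b → z t ∈ B.homogeneousGens) :
    A.bracket z = 0 := by
  rcases ha with ha | ha <;> rcases hb with hb | hb
  · exact B.bracket_eq_zero_of_basis_of_basis huw ha hb fun t hta htb => (hz t hta htb).1
  · exact B.bracket_eq_zero_of_basis_of_prod huw hab ha hb hz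
  · exact B.bracket_eq_zero_of_basis_of_prod (Ne.symm huw) hab.symm hb ha
      fun t htb hta => hz t hta htb
  · exact B.bracket_eq_zero_of_prod_of_prod huw hab ha hb hz

theorem bracket_eq_zero_of_mem_Jcls (hab : a ≠ b) (ha : z a ∈ B.Jcls u) (hb : z b ∈ B.Jcls w) :
    A.bracket z = 0 := by
  classical
  let s : Fin (n + 2) → Set L := fun t =>
    if t = a then B.clsGens u else if t = b then B.clsGens w else B.homogeneousGens
  refine A.bracket.map_eq_zero_of_forall_mem_span s (fun z' hz' => ?_) fun t => ?_
  · exact B.bracket_eq_zero_of_mem_clsGens huw hab (by simpa [s] using hz' a)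
      (by simpa [s, hab.symm] using hz' b) fun t hta htb => by simpa [s, hta, htb] using hz' t
  · by_cases hta : t = a
    · subst hta
      simpa [s] using B.Jcls_le_span_clsGens u ha
    by_cases htb : t = b
    · subst htb
      simpa [s, hta] using B.Jcls_le_span_clsGens w hb
    simp [s, hta, htb, B.span_homogeneousGens]

end QMBasis

theorem stmt7 {F : Type} [Field F] {G : Type} [AddCommGroup G] [DecidableEq G]
    {L : Type} [AddCommGroup L] [Module F L] {n : ℕ} {I : Type}
    {A : ColorGLT F G L n} (B : QMBasis A I) (i h : I) (hne : B.cls i ≠ B.cls h)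
    (σ : Equiv.Perm (Fin (n + 2))) (x : Fin (n + 2) → L)
    (h0 : x 0 ∈ B.Jcls i) (h1 : x 1 ∈ B.Jcls h) :
    A.bracket (fun t => x (σ t)) = 0 :=
  B.bracket_eq_zero_of_mem_Jcls hne (σ.symm.injective.ne zero_ne_one) (by simpa using h0)
    (by simpa using h1)
end
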